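/- Fix t > 0 and let J_t be the closed ideal of AAP(ℝ) generated by the functions e^{iλx} − e^{iλe^t x}, λ > 0. Then J_t equals the ideal I_0 = {f ∈ AAP(ℝ) : f(0) = 0 and x_∞(f) = 0}. -/

import Mathlib

set_option synthInstance.maxHeartbeats 1000000

open BoundedContinuousFunction Filter

/-- The exponential `x ↦ e^{iλx}` as a bounded continuous function on `ℝ`. -/
noncomputable def expB (l : ℝ) : BoundedContinuousFunction ℝ ℂ :=
  BoundedContinuousFunction.ofNormedAddCommGroup
    (fun x : ℝ => Complex.exp (Complex.I * l * x))
    (by fun_prop) 1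
    (by
      intro x
      rw [Complex.norm_exp]
      simp [Complex.mul_re])

/-- `AAP(ℝ)` as a closed subalgebra of the bounded continuous functions: the uniform closure
of the algebra generated by the exponentials `e^{iλx}`, `λ ≥ 0`. -/
noncomputable def AAPalg : Subalgebra ℂ (BoundedContinuousFunction ℝ ℂ) :=
  (Algebra.adjoin ℂ (expB '' {l : ℝ | 0 ≤ l})).topologicalClosure

/-!
Both conditions defining `I₀` are closed. They hold on `J_t` because `J_t` lies in the closed
span of the exponentials of positive frequency, which is stable under multiplication by `AAP(ℝ)`
and on which the Bohr mean vanishes.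

Conversely, multiplying the generator `e^{ilx} - e^{ile^t x}` by `e^{iνx}` shows
`e^{iλx} ≡ e^{iμx} mod J_t` whenever `λ ≤ μ ≤ e^t λ`, hence for all `λ, μ > 0`. So every
trigonometric polynomial `g` is `c₀ + C e^{ix}` modulo `J_t`, where `c₀` is the Bohr mean of `g`
and `c₀ + C = g(0)`. If `f ∈ I₀` is within `δ` of `g`, both `|c₀|` and `|c₀ + C|` are at most `δ`,
and `f` is within `4δ` of `J_t`.
-/

open Set Topology
open scoped NNReal

theorem eq_of_forall_le_le_mul_eq {K α : Type*} [Semifield K] [LinearOrder K]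
    [IsStrictOrderedRing K] [Archimedean K] [ExistsAddOfLE K] {φ : K → α} {q : K} (hq : 1 < q)
    (h : ∀ a b, 0 < a → a ≤ b → b ≤ a * q → φ a = φ b) {a b : K} (ha : 0 < a) (hb : 0 < b) :
    φ a = φ b := by
  wlog hab : a ≤ b generalizing a b
  · exact (this hb ha (le_of_not_ge hab)).symm
  obtain ⟨n, hn⟩ := pow_unbounded_of_one_lt (b / a) hq
  rw [div_lt_iff₀ ha, mul_comm] at hn
  clear hb
  induction n generalizing a with
  | zero => exact absurd hab (by simpa using hn)
  | succ n ih =>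
    by_cases hbq : b ≤ a * q
    · exact h a b ha hab hbq
    have haq : 0 < a * q := mul_pos ha (zero_lt_one.trans hq)
    calc φ a = φ (a * q) := h a _ ha (le_mul_of_one_le_right ha.le hq.le) le_rfl
      _ = φ b := ih haq (le_of_not_ge hbq) (by rwa [mul_assoc, ← pow_succ'])

theorem NNReal.exists_add_eq_and_mul_add_eq {a b q : ℝ≥0} (hq : 1 < q) (hab : a < b)
    (hbq : b ≤ a * q) : ∃ l ν : ℝ≥0, 0 < l ∧ l + ν = a ∧ l * q + ν = b := by
  have hq1 : (0 : ℝ) < q - 1 := by rw [sub_pos]; exact_mod_cast hq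
  set l : ℝ := (b - a) / (q - 1)
  have hl : l * (q - 1) = b - a := div_mul_cancel₀ _ hq1.ne'
  have hla : l ≤ a := by
    rw [div_le_iff₀ hq1]
    have : (b : ℝ) ≤ a * q := by exact_mod_cast hbq
    linarith
  refine ⟨⟨l, div_nonneg (by simpa using hab.le) hq1.le⟩, ⟨a - l, by linarith⟩,
    div_pos (by simpa using hab) hq1, NNReal.eq (show l + (a - l) = (a : ℝ) by ring),
    NNReal.eq (show l * q + (a - l) = (b : ℝ) by linarith)⟩

lemma expB_apply (l x : ℝ) : expB l x = Complex.exp (Complex.I * l * x) := rfl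

lemma norm_expB_le (l : ℝ) : ‖expB l‖ ≤ 1 :=
  norm_ofNormedAddCommGroup_le _ zero_le_one _

@[simp] lemma expB_apply_zero (l : ℝ) : expB l 0 = 1 := by simp [expB_apply]

@[simp] lemma expB_zero : expB 0 = 1 := by ext x; simp [expB_apply]

lemma expB_add (a b : ℝ) : expB (a + b) = expB a * expB b := by
  ext x
  simp only [expB_apply, mul_apply, ← Complex.exp_add]
  push_cast
  ring_nf

noncomputable def bohrMean (T : ℝ) : (ℝ →ᵇ ℂ) →ₗ[ℂ] ℂ where
  toFun u := (1 / (2 * T) : ℂ) * ∫ x in (-T)..T, u x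
  map_add' u v := by
    simp only [BoundedContinuousFunction.add_apply, mul_add,
      intervalIntegral.integral_add (u.continuous.intervalIntegrable _ _)
        (v.continuous.intervalIntegrable _ _)]
  map_smul' c u := by
    simp only [BoundedContinuousFunction.smul_apply, smul_eq_mul,
      intervalIntegral.integral_const_mul, RingHom.id_apply]
    ring

lemma norm_bohrMean_le (T : ℝ) (u : ℝ →ᵇ ℂ) : ‖bohrMean T u‖ ≤ ‖u‖ := by
  have hint : ‖∫ x in (-T)..T, u x‖ ≤ ‖u‖ * |2 * T| := by
    simpa [two_mul] using intervalIntegral.norm_integral_le_of_norm_le_const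
      (a := -T) (b := T) fun x _ => u.norm_coe_le_norm x
  calc ‖bohrMean T u‖ = |2 * T|⁻¹ * ‖∫ x in (-T)..T, u x‖ := by
        simp [bohrMean, Complex.norm_real]
    _ ≤ |2 * T|⁻¹ * (‖u‖ * |2 * T|) := by gcongr
    _ ≤ ‖u‖ := by
        rcases eq_or_ne T 0 with rfl | hT
        · simp
        · rw [mul_comm ‖u‖, ← mul_assoc, inv_mul_cancel₀ (by positivity), one_mul]

lemma bohrMean_one {T : ℝ} (hT : T ≠ 0) : bohrMean T 1 = 1 := by
  have : (T : ℂ) ≠ 0 := by exact_mod_cast hT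
  simp only [bohrMean, LinearMap.coe_mk, AddHom.coe_mk, coe_one, Pi.one_apply,
    intervalIntegral.integral_const, sub_neg_eq_add, Complex.real_smul, mul_one]
  push_cast
  field_simp
  ring

lemma norm_integral_expB_le {l : ℝ} (hl : l ≠ 0) (a b : ℝ) :
    ‖∫ x in a..b, expB l x‖ ≤ 2 / |l| := by
  have hc : Complex.I * l ≠ 0 := by simp [hl]
  have hbound (x : ℝ) : ‖expB l x‖ ≤ 1 := (norm_coe_le_norm _ x).trans (norm_expB_le l)
  calc ‖∫ x in a..b, expB l x‖ = ‖expB l b - expB l a‖ / |l| := by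
        simp only [expB_apply]
        rw [integral_exp_mul_complex hc, norm_div]
        simp
    _ ≤ 2 / |l| := by
        gcongr
        exact (norm_sub_le _ _).trans (by linarith [hbound a, hbound b])

lemma tendsto_bohrMean_expB {l : ℝ} (hl : l ≠ 0) :
    Tendsto (bohrMean · (expB l)) atTop (𝓝 0) := by
  refine squeeze_zero_norm' (a := fun T => |l|⁻¹ * T⁻¹) ?_ ?_
  · filter_upwards [eventually_gt_atTop 0] with T hT
    calc ‖bohrMean T (expB l)‖ = (2 * T)⁻¹ * ‖∫ x in (-T)..T, expB l x‖ := by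
          simp [bohrMean, abs_of_pos hT]
      _ ≤ (2 * T)⁻¹ * (2 / |l|) := by gcongr; exact norm_integral_expB_le hl _ _
      _ = |l|⁻¹ * T⁻¹ := by field_simp
  · simpa using tendsto_inv_atTop_zero.const_mul |l|⁻¹

lemma norm_le_of_tendsto_bohrMean {u : ℝ →ᵇ ℂ} {c : ℂ}
    (h : Tendsto (bohrMean · u) atTop (𝓝 c)) : ‖c‖ ≤ ‖u‖ :=
  le_of_tendsto' h.norm fun T => norm_bohrMean_le T u

noncomputable def bohrMeanNull : Submodule ℂ (ℝ →ᵇ ℂ) where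
  carrier := {u | Tendsto (bohrMean · u) atTop (𝓝 0)}
  add_mem' {u v} hu hv := by simpa using hu.add hv
  zero_mem' := by simp
  smul_mem' c u hu := by simpa using hu.const_mul c

lemma isClosed_bohrMeanNull : IsClosed (bohrMeanNull : Set (ℝ →ᵇ ℂ)) := by
  have hlip : ∀ T, LipschitzWith 1 (bohrMean T) := fun T => by
    simpa using AddMonoidHomClass.lipschitz_of_bound (bohrMean T) 1 fun u => by
      simpa using norm_bohrMean_le T u
  exact (LipschitzWith.uniformEquicontinuous _ 1 hlip).equicontinuous.isClosed_setOfPred_tendsto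
    continuous_const

lemma coe_submonoidClosure_expB_image :
    (Submonoid.closure (expB '' Ici 0) : Set (ℝ →ᵇ ℂ)) = expB '' Ici 0 := by
  refine subset_antisymm (fun u hu => ?_) Submonoid.subset_closure
  induction hu using Submonoid.closure_induction with
  | mem u hu => exact hu
  | one => exact ⟨0, self_mem_Ici, expB_zero⟩
  | mul u v _ _ hu hv =>
    obtain ⟨a, ha, rfl⟩ := hu
    obtain ⟨b, hb, rfl⟩ := hv
    exact ⟨a + b, mem_Ici.2 (add_nonneg ha hb), expB_add a b⟩

lemma coe_AAPalg :
    (AAPalg : Set (ℝ →ᵇ ℂ)) = closure (Submodule.span ℂ (expB '' Ici 0)) := by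
  change ((Algebra.adjoin ℂ (expB '' Ici 0)).topologicalClosure : Set (ℝ →ᵇ ℂ)) = _
  rw [Subalgebra.topologicalClosure_coe, ← Subalgebra.coe_toSubmodule,
    Algebra.adjoin_eq_span, coe_submonoidClosure_expB_image]

noncomputable def posFreq : Submodule ℂ (ℝ →ᵇ ℂ) :=
  (Submodule.span ℂ (expB '' Ioi 0)).topologicalClosure

lemma posFreq_le_bohrMeanNull : posFreq ≤ bohrMeanNull := by
  refine Submodule.topologicalClosure_minimal _ (Submodule.span_le.2 ?_) isClosed_bohrMeanNull
  rintro _ ⟨l, hl, rfl⟩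
  exact tendsto_bohrMean_expB (ne_of_gt hl)

lemma span_expB_mul_span_expB_le :
    Submodule.span ℂ (expB '' Ici 0) * Submodule.span ℂ (expB '' Ioi 0) ≤
      Submodule.span ℂ (expB '' Ioi 0) := by
  rw [Submodule.span_mul_span]
  refine Submodule.span_mono ?_
  rintro _ ⟨_, ⟨a, ha, rfl⟩, _, ⟨b, hb, rfl⟩, rfl⟩
  exact ⟨a + b, mem_Ioi.2 (add_pos_of_nonneg_of_pos ha hb), expB_add a b⟩

lemma mul_mem_posFreq {a u : ℝ →ᵇ ℂ} (ha : a ∈ AAPalg) (hu : u ∈ posFreq) :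
    a * u ∈ posFreq := by
  rw [← SetLike.mem_coe, coe_AAPalg] at ha
  exact map_mem_closure₂ continuous_mul ha hu fun a ha u hu =>
    span_expB_mul_span_expB_le (Submodule.mul_mem_mul ha hu)

noncomputable def vanishingPosFreqIdeal : Ideal AAPalg where
  carrier := {f | (f : ℝ →ᵇ ℂ) 0 = 0 ∧ (f : ℝ →ᵇ ℂ) ∈ posFreq}
  add_mem' hf hg := ⟨by simp [hf.1, hg.1], posFreq.add_mem hf.2 hg.2⟩
  zero_mem' := ⟨rfl, posFreq.zero_mem⟩
  smul_mem' a f hf := ⟨by simp [hf.1], mul_mem_posFreq a.2 hf.2⟩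

lemma isClosed_vanishingPosFreqIdeal : IsClosed (vanishingPosFreqIdeal : Set AAPalg) :=
  ((isClosed_eq (continuous_eval_const 0) continuous_const).inter
    (Submodule.isClosed_topologicalClosure _)).preimage continuous_subtype_val

noncomputable def expAAP (l : ℝ≥0) : AAPalg :=
  ⟨expB l, subset_closure (Algebra.subset_adjoin ⟨l, l.2, rfl⟩)⟩

lemma expAAP_add (a b : ℝ≥0) : expAAP (a + b) = expAAP a * expAAP b :=
  Subtype.ext (expB_add a b)

noncomputable def Jt (t : ℝ) : Ideal AAPalg :=
  Ideal.span {x : AAPalg | ∃ l : ℝ, 0 < l ∧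
    (x : ℝ →ᵇ ℂ) = expB l - expB (l * Real.exp t)}

lemma Jt_le_vanishingPosFreqIdeal (t : ℝ) : Jt t ≤ vanishingPosFreqIdeal := by
  refine Ideal.span_le.2 ?_
  rintro x ⟨l, hl, hx⟩
  have hexp {l : ℝ} (hl : 0 < l) : expB l ∈ posFreq :=
    Submodule.le_topologicalClosure _ (Submodule.subset_span ⟨l, hl, rfl⟩)
  exact ⟨by simp [hx], hx ▸ posFreq.sub_mem (hexp hl) (hexp (by positivity))⟩

section

variable {t : ℝ}

lemma expAAP_sub_expAAP_mem_Jt (ht : 0 < t) {a b : ℝ≥0} (ha : 0 < a) (hb : 0 < b) :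
    expAAP a - expAAP b ∈ Jt t := by
  let q : ℝ≥0 := ⟨Real.exp t, (Real.exp_pos t).le⟩
  have hq : 1 < q := NNReal.coe_lt_coe.1 (Real.one_lt_exp_iff.2 ht)
  have hgen (l : ℝ≥0) (hl : 0 < l) : expAAP l - expAAP (l * q) ∈ Jt t :=
    Ideal.subset_span ⟨l, hl, rfl⟩
  rw [← Ideal.Quotient.eq]
  refine eq_of_forall_le_le_mul_eq (φ := fun l => Ideal.Quotient.mk (Jt t) (expAAP l)) hq
    (fun a b ha hab hbq => ?_) ha hb
  rcases hab.eq_or_lt with rfl | hab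
  · rfl
  obtain ⟨l, ν, hl, rfl, rfl⟩ := NNReal.exists_add_eq_and_mul_add_eq hq hab hbq
  rw [Ideal.Quotient.eq, expAAP_add, expAAP_add, ← sub_mul]
  exact Ideal.mul_mem_right _ _ (hgen l hl)

lemma span_expB_le_Jt_sup (ht : 0 < t) :
    Submodule.span ℂ (expB '' Ici 0) ≤
      ((Jt t).restrictScalars ℂ).map AAPalg.val.toLinearMap ⊔
        Submodule.span ℂ {1, expB 1} := by
  refine Submodule.span_le.2 ?_
  rintro _ ⟨l, hl, rfl⟩
  rcases (mem_Ici.1 hl).eq_or_lt with rfl | hl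
  · exact Submodule.mem_sup_right (by simpa using Submodule.subset_span (mem_insert _ _))
  · rw [← sub_add_cancel (expB l) (expB 1)]
    exact Submodule.add_mem_sup
      ⟨_, expAAP_sub_expAAP_mem_Jt (a := ⟨l, hl.le⟩) ht hl one_pos, rfl⟩
      (Submodule.subset_span (mem_insert_of_mem _ rfl))

lemma exists_mem_Jt_dist_le (ht : 0 < t) {f : AAPalg} (hf0 : (f : ℝ →ᵇ ℂ) 0 = 0)
    (hf : Tendsto (bohrMean · f) atTop (𝓝 0)) {g : ℝ →ᵇ ℂ}
    (hg : g ∈ Submodule.span ℂ (expB '' Ici 0)) :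
    ∃ j ∈ Jt t, dist f j ≤ 4 * dist (f : ℝ →ᵇ ℂ) g := by
  obtain ⟨_, ⟨j, hj, rfl⟩, _, hv, hg⟩ := Submodule.mem_sup.1 (span_expB_le_Jt_sup ht hg)
  obtain ⟨c, C, rfl⟩ := Submodule.mem_span_pair.1 hv
  simp only [AlgHom.toLinearMap_apply, Subalgebra.coe_val] at hg
  obtain ⟨hj0, hjP⟩ := Jt_le_vanishingPosFreqIdeal t hj
  set δ := dist (f : ℝ →ᵇ ℂ) g
  have hδ : ‖g - (f : ℝ →ᵇ ℂ)‖ = δ := by rw [← dist_eq_norm, dist_comm]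
  have hc : ‖c‖ ≤ δ := by
    have h1 : Tendsto (bohrMean · 1) atTop (𝓝 1) := tendsto_const_nhds.congr' <|
      (eventually_ne_atTop 0).mono fun T hT => (bohrMean_one hT).symm
    have hmean : Tendsto (bohrMean · (g - f)) atTop (𝓝 c) := by
      simpa [← hg] using ((posFreq_le_bohrMeanNull hjP).add ((h1.const_mul c).add
        ((tendsto_bohrMean_expB one_ne_zero).const_mul C))).sub hf
    exact hδ ▸ norm_le_of_tendsto_bohrMean hmean
  have hcC : ‖c + C‖ ≤ δ := by
    rw [← hδ]
    simpa [← hg, hj0, hf0] using norm_coe_le_norm (g - (f : ℝ →ᵇ ℂ)) 0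
  refine ⟨j, hj, ?_⟩
  calc dist f j = ‖((f : ℝ →ᵇ ℂ) - g) + c • (1 - expB 1) + (c + C) • expB 1‖ := by
        rw [Subtype.dist_eq, dist_eq_norm, ← hg]
        congr 1
        module
    _ ≤ δ + ‖c‖ * 2 + ‖c + C‖ * 1 := by
        refine norm_add₃_le.trans (add_le_add_three (by rw [← dist_eq_norm]) ?_ ?_)
        · rw [norm_smul]
          gcongr
          have h1 : ‖(1 : ℝ →ᵇ ℂ)‖ = 1 := norm_one
          exact (norm_sub_le _ _).trans (by linarith [norm_expB_le 1])
        · rw [norm_smul]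
          gcongr
          exact norm_expB_le 1
    _ ≤ 4 * δ := by linarith

end

/-- For `t > 0`, the closed ideal `J_t` of `AAP(ℝ)` generated by the functions
`e^{iλx} − e^{iλe^t x}` for `λ > 0` equals the ideal
`I_0 = {f ∈ AAP(ℝ) : f(0) = 0 and x_∞(f) = 0}`, where `x_∞(f)` is the Bohr mean
`lim_{T→∞} (1/2T) ∫_{-T}^{T} f`. -/
theorem stmt18 (t : ℝ) (ht : 0 < t) :
    closure ((Ideal.span {x : AAPalg | ∃ l : ℝ, 0 < l ∧
        (x : BoundedContinuousFunction ℝ ℂ) = expB l - expB (l * Real.exp t)} :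
      Ideal AAPalg) : Set AAPalg)
    = {f : AAPalg | (f : BoundedContinuousFunction ℝ ℂ) 0 = 0 ∧
        Tendsto (fun T : ℝ => (1 / (2 * T) : ℂ) *
            ∫ x in (-T)..T, (f : BoundedContinuousFunction ℝ ℂ) x)
          atTop (nhds 0)} := by
  change closure (Jt t : Set AAPalg) =
    {f : AAPalg | (f : ℝ →ᵇ ℂ) 0 = 0 ∧ Tendsto (bohrMean · f) atTop (𝓝 0)}
  refine subset_antisymm ?_ fun f ⟨hf0, hf⟩ => Metric.mem_closure_iff.2 fun ε hε => ?_
  · exact (closure_minimal (Jt_le_vanishingPosFreqIdeal t) isClosed_vanishingPosFreqIdeal).trans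
      fun f hf => ⟨hf.1, posFreq_le_bohrMeanNull hf.2⟩
  · have hfg : (f : ℝ →ᵇ ℂ) ∈ closure (Submodule.span ℂ (expB '' Ici 0)) := coe_AAPalg ▸ f.2
    obtain ⟨g, hg, hdist⟩ := Metric.mem_closure_iff.1 hfg (ε / 4) (by positivity)
    obtain ⟨j, hj, hfj⟩ := exists_mem_Jt_dist_le ht hf0 hf hg
    exact ⟨j, hj, by linarith⟩
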